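/- arXiv:1309.5566 — 2 statements merged into one kernel-verified Lean document; each statement's English description precedes it below -/
import Mathlib

section
/- The Bessel function J_λ defined by the power series J_λ(z) = (z/2)^λ Σ_{n=0}^∞ (−z²)^n / (2^{2n} n! Γ(n+λ+1)) satisfies z² J_λ''(z) + z J_λ'(z) + (z² − λ²) J_λ(z) = 0 for z in ℂ minus a branch cut (or for z > 0 real). -/
/-!
Writing `F b w = ∑ wⁿ / (n! Γ(b + n))` for the entire function `₀F̃₁(; b; w)` (Mathlib's
`regularizedHGFun 0 {b}`), one has `J_λ(z) = (z/2)^λ F (λ + 1) (-(z/2)²)`. Termwise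
differentiation gives `F b' = F (b + 1)`, and the recurrence `Γ(s)⁻¹ = s Γ(s + 1)⁻¹` gives the
contiguous relation `w F (b + 2) w + b F (b + 1) w = F b w`, i.e. `w F'' + b F' = F`. Substituting
into Bessel's equation, the left-hand side becomes `-(z/2)^λ z²` times this relation at
`b = λ + 1`, `w = -(z/2)²`.
-/

open Complex

/-- The Bessel function of the first kind, `J_λ(z) = (z/2)^λ ∑ (-z²)^n / (2^{2n} n! Γ(n+λ+1))`. -/
noncomputable def besselJ (lam : ℂ) (z : ℂ) : ℂ :=
  (z / 2) ^ lam *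
    ∑' n : ℕ, (-z ^ 2) ^ n / (2 ^ (2 * n) * (Nat.factorial n : ℂ) * Complex.Gamma ((n : ℂ) + lam + 1))

open Topology

namespace FormalMultilinearSeries

theorem hasDerivAt_ofScalarsSum {𝕜 : Type*} [NontriviallyNormedField 𝕜] [CompleteSpace 𝕜]
    {c : ℕ → 𝕜} {x : 𝕜} (hx : ‖x‖ₑ < (ofScalars 𝕜 c).radius) :
    HasDerivAt (ofScalarsSum c) (ofScalarsSum (fun n ↦ (n + 1) • c (n + 1)) x) x := by
  have hsum := (ofScalars 𝕜 c).derivSeries.summable (x := x)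
    (by simpa using hx.trans_le (ofScalars 𝕜 c).radius_le_radius_derivSeries)
  have hderiv :
      (ofScalars 𝕜 c).derivSeries.sum x 1 = ofScalarsSum (fun n ↦ (n + 1) • c (n + 1)) x := by
    rw [ofScalars_sum_eq]
    unfold FormalMultilinearSeries.sum
    rw [← ContinuousLinearMap.apply_apply (𝕜 := 𝕜) (v := (1 : 𝕜)),
      ContinuousLinearMap.map_tsum _ hsum]
    refine tsum_congr fun n ↦ ?_
    simp [mul_comm]
  exact hderiv ▸ ((ofScalars 𝕜 c).hasFDerivAt_sum hx).hasDerivAt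

end FormalMultilinearSeries

namespace Complex

open FormalMultilinearSeries
open scoped Nat

lemma regularizedHGFunCoeff_zero_singleton (b : ℂ) (n : ℕ) :
    regularizedHGFunCoeff 0 {b} n = ((n ! : ℂ) * Gamma (b + n))⁻¹ := by
  simp [regularizedHGFunCoeff]

lemma radius_regularizedHGFunSeries_zero_singleton (b : ℂ) :
    (regularizedHGFunSeries 0 {b}).radius = ⊤ :=
  radius_regularizedHGFunSeries_eq_top (by simp)

lemma regularizedHGFun_zero_singleton_eq_tsum (b w : ℂ) :
    regularizedHGFun 0 {b} w = ∑' n, ((n ! : ℂ) * Gamma (b + n))⁻¹ * w ^ n := by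
  simp [regularizedHGFun, regularizedHGFunSeries, ← ofScalarsSum.eq_def, ofScalars_sum_eq,
    regularizedHGFunCoeff_zero_singleton]

lemma summable_regularizedHGFunCoeff_zero_singleton_mul_pow (b w : ℂ) :
    Summable fun n : ℕ ↦ ((n ! : ℂ) * Gamma (b + n))⁻¹ * w ^ n := by
  simpa [regularizedHGFunSeries, regularizedHGFunCoeff_zero_singleton, mul_comm] using
    (regularizedHGFunSeries 0 {b}).summable (x := w)
      (by simp [radius_regularizedHGFunSeries_zero_singleton])

lemma hasDerivAt_regularizedHGFun_zero_singleton (b w : ℂ) :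
    HasDerivAt (regularizedHGFun 0 {b}) (regularizedHGFun 0 {b + 1} w) w := by
  have hcoeff : (fun n : ℕ ↦ (n + 1) • regularizedHGFunCoeff 0 {b} (n + 1)) =
      regularizedHGFunCoeff 0 {b + 1} := by
    funext n
    simp only [regularizedHGFunCoeff_zero_singleton, Nat.factorial_succ, nsmul_eq_mul]
    push_cast
    rw [show b + (n + 1) = b + 1 + n by ring]
    field_simp
  have h := hasDerivAt_ofScalarsSum (c := regularizedHGFunCoeff 0 {b}) (x := w)
    (by simp [← regularizedHGFunSeries.eq_def, radius_regularizedHGFunSeries_zero_singleton])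
  rwa [hcoeff] at h

/- Mathlib's `Γ` vanishes at its poles, so `(Γ s)⁻¹ = s (Γ (s + 1))⁻¹` holds for every `s` and no
case distinction on `b` is needed. -/
lemma regularizedHGFun_zero_singleton_contiguous (b w : ℂ) :
    w * regularizedHGFun 0 {b + 1 + 1} w + b * regularizedHGFun 0 {b + 1} w =
      regularizedHGFun 0 {b} w := by
  have hconst : b * (Gamma (b + 1))⁻¹ = (Gamma b)⁻¹ :=
    (one_div_Gamma_eq_self_mul_one_div_Gamma_add_one b).symm
  have hsucc (n : ℕ) : ((n ! : ℂ) * Gamma (b + 1 + 1 + n))⁻¹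
      + b * (((n + 1)! : ℂ) * Gamma (b + 1 + (n + 1 : ℕ)))⁻¹ =
      (((n + 1)! : ℂ) * Gamma (b + (n + 1 : ℕ)))⁻¹ := by
    have hGamma := one_div_Gamma_eq_self_mul_one_div_Gamma_add_one (b + (n + 1 : ℕ))
    rw [Nat.factorial_succ]
    push_cast at hGamma ⊢
    rw [show b + 1 + 1 + n = b + (n + 1) + 1 by ring,
      show b + 1 + (n + 1) = b + (n + 1) + 1 by ring, mul_inv, mul_inv, mul_inv, mul_inv, hGamma]
    field_simp
    ring
  simp only [regularizedHGFun_zero_singleton_eq_tsum]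
  rw [(summable_regularizedHGFunCoeff_zero_singleton_mul_pow b w).tsum_eq_zero_add,
    (summable_regularizedHGFunCoeff_zero_singleton_mul_pow (b + 1) w).tsum_eq_zero_add,
    ← tsum_mul_left, mul_add, ← tsum_mul_left, add_left_comm, ← Summable.tsum_add]
  · congr 1
    · simpa using hconst
    · refine tsum_congr fun n ↦ ?_
      rw [← hsucc n]
      ring
  · exact (summable_regularizedHGFunCoeff_zero_singleton_mul_pow _ w).mul_left w
  · exact ((summable_nat_add_iff 1).mpr
      (summable_regularizedHGFunCoeff_zero_singleton_mul_pow _ w)).mul_left b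

variable {lam z : ℂ}

lemma div_two_mem_slitPlane (hz : z ∈ slitPlane) : z / 2 ∈ slitPlane := by
  rw [mem_slitPlane_iff] at hz ⊢
  simpa using hz

lemma hasDerivAt_div_two_cpow (hz : z ∈ slitPlane) :
    HasDerivAt (fun w ↦ (w / 2) ^ lam) (lam / z * (z / 2) ^ lam) z := by
  refine (((hasDerivAt_id' z).div_const 2).cpow_const (div_two_mem_slitPlane hz)).congr_deriv ?_
  rw [cpow_sub _ _ (div_ne_zero (slitPlane_ne_zero hz) two_ne_zero), cpow_one]
  field_simp

lemma hasDerivAt_regularizedHGFun_zero_singleton_neg_div_two_sq (b z : ℂ) :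
    HasDerivAt (fun w ↦ regularizedHGFun 0 {b} (-(w / 2) ^ 2))
      (-(z / 2) * regularizedHGFun 0 {b + 1} (-(z / 2) ^ 2)) z := by
  have hinner : HasDerivAt (fun w : ℂ ↦ -(w / 2) ^ 2) (-(z / 2)) z :=
    (((hasDerivAt_id' z).div_const 2).pow 2).neg.congr_deriv (by norm_num; ring)
  exact ((hasDerivAt_regularizedHGFun_zero_singleton b _).comp z hinner).congr_deriv
    (mul_comm _ _)

end Complex

section

variable {lam z : ℂ}

lemma besselJ_eq_regularizedHGFun (lam z : ℂ) :
    besselJ lam z = (z / 2) ^ lam * regularizedHGFun 0 {lam + 1} (-(z / 2) ^ 2) := by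
  rw [besselJ, regularizedHGFun_zero_singleton_eq_tsum]
  congr 1
  refine tsum_congr fun n ↦ ?_
  rw [show lam + 1 + n = n + lam + 1 by ring,
    show (-(z / 2) ^ 2) ^ n = (-z ^ 2) ^ n / 2 ^ (2 * n) by rw [pow_mul, ← div_pow]; ring]
  ring

lemma hasDerivAt_besselJ (hz : z ∈ slitPlane) :
    HasDerivAt (besselJ lam)
      ((z / 2) ^ lam * (lam / z * regularizedHGFun 0 {lam + 1} (-(z / 2) ^ 2)
        - z / 2 * regularizedHGFun 0 {lam + 1 + 1} (-(z / 2) ^ 2))) z := by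
  rw [funext (besselJ_eq_regularizedHGFun lam)]
  exact ((hasDerivAt_div_two_cpow hz).mul
    (hasDerivAt_regularizedHGFun_zero_singleton_neg_div_two_sq (lam + 1) z)).congr_deriv (by ring)

theorem besselJ_ode (hz : z ∈ slitPlane) :
    z ^ 2 * deriv (deriv (besselJ lam)) z + z * deriv (besselJ lam) z
      + (z ^ 2 - lam ^ 2) * besselJ lam z = 0 := by
  have hz0 : z ≠ 0 := slitPlane_ne_zero hz
  set J' : ℂ → ℂ := fun w ↦ (w / 2) ^ lam *
    (lam / w * regularizedHGFun 0 {lam + 1} (-(w / 2) ^ 2)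
      - w / 2 * regularizedHGFun 0 {lam + 1 + 1} (-(w / 2) ^ 2))
  have hderiv : deriv (besselJ lam) =ᶠ[𝓝 z] J' :=
    Filter.eventually_of_mem (isOpen_slitPlane.mem_nhds hz) fun w hw ↦
      (hasDerivAt_besselJ hw).deriv
  have hderiv' : HasDerivAt J' _ z := (hasDerivAt_div_two_cpow hz).mul
    ((((hasDerivAt_const z lam).fun_div (hasDerivAt_id' z) hz0).mul
      (hasDerivAt_regularizedHGFun_zero_singleton_neg_div_two_sq (lam + 1) z)).sub
      (((hasDerivAt_id' z).div_const 2).mul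
        (hasDerivAt_regularizedHGFun_zero_singleton_neg_div_two_sq (lam + 1 + 1) z)))
  have hcontig := regularizedHGFun_zero_singleton_contiguous (lam + 1) (-(z / 2) ^ 2)
  rw [hderiv.deriv_eq, hderiv'.deriv, (hasDerivAt_besselJ hz).deriv, besselJ_eq_regularizedHGFun]
  generalize regularizedHGFun 0 {lam + 1} (-(z / 2) ^ 2) = F₀ at hcontig ⊢
  generalize regularizedHGFun 0 {lam + 1 + 1} (-(z / 2) ^ 2) = F₁ at hcontig ⊢
  generalize regularizedHGFun 0 {lam + 1 + 1 + 1} (-(z / 2) ^ 2) = F₂ at hcontig ⊢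
  field_simp
  linear_combination (-4 * (z / 2) ^ lam * z ^ 2) * hcontig

end

/-- For real `z > 0`, the Bessel function satisfies `z² J'' + z J' + (z² - λ²) J = 0`. -/
theorem bessel_ode (lam : ℂ) (x : ℝ) (hx : 0 < x) :
    (x : ℂ) ^ 2 * deriv (deriv (besselJ lam)) (x : ℂ) + (x : ℂ) * deriv (besselJ lam) (x : ℂ)
      + ((x : ℂ) ^ 2 - lam ^ 2) * besselJ lam (x : ℂ) = 0 :=
  besselJ_ode (ofReal_mem_slitPlane.mpr hx)
end

section
/- For parameters α > 0, λ ≠ 0, δ ∈ ℝ and θ = α/2, the function η*(t,q) = C (e^{λt}−1)^{−δ/2} q^{(δ−1)/2} exp(λδt/4 − λq²/(α² tanh(λt/2))), where C = 2^{δ/2+1} α^{−δ} λ^{δ/2} Γ(δ/2)^{−1}, satisfies on (0,∞) × (0,∞) the dual (forward) heat equation with potential: −θ² ∂η*/∂t = −(θ⁴/2) ∂²η*/∂q² + V η*, where V(t,q) = A/q² + Bq², A = α⁴(δ−1)(δ−3)/128, B = λ²/8. -/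
open Real Filter Topology

/-!
For fixed `t`, `η*` is a constant multiple of `q ^ p * exp (-k q²)` with `p = (δ - 1)/2` and
`k = λ coth(λt/2) / α²`, whose second derivative is `p(p-1)/q² - 2k(2p+1) + 4k²q²` times itself.
For fixed `q`, the factor `(e^{λt} - 1)^{-δ/2} e^{λδt/4}` behaves like `(2 sinh(λt/2))^{-δ/2}`,
so the time derivative is `-(λδ/4) coth(λt/2) + (λ²q²/2α²)(coth²(λt/2) - 1)` times `η*`.
Both sides of the equation are therefore `η*` times Laurent polynomials in `q` and `coth(λt/2)`:
the `q⁻²` terms produce `A`, the `coth² q²` terms cancel and the remaining `q²` term produces `B`.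
-/

theorem Real.tanh_half_eq (x : ℝ) : tanh (x / 2) = (exp x - 1) / (exp x + 1) := by
  have hx : exp x = exp (x / 2) * exp (x / 2) := by rw [← exp_add, add_halves]
  rw [tanh_eq, hx, exp_neg]
  field_simp

theorem Real.hasDerivAt_inv_tanh {x : ℝ} (hx : x ≠ 0) :
    HasDerivAt (fun y => (tanh y)⁻¹) (1 - (tanh x)⁻¹ ^ 2) x := by
  have hsinh : sinh x ≠ 0 := sinh_eq_zero.not.mpr hx
  have hcoth : (fun y => (tanh y)⁻¹) = fun y => cosh y / sinh y := by
    funext y; rw [tanh_eq_sinh_div_cosh, inv_div]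
  rw [hcoth, tanh_eq_sinh_div_cosh, inv_div]
  refine ((hasDerivAt_cosh x).div (hasDerivAt_sinh x) hsinh).congr_deriv ?_
  field_simp

/-- For `a > 0` this is `(2 sinh (a τ / 2)) ^ s`; for `a < 0` the base `exp (a τ) - 1` is negative,
where `rpow` is still differentiable with the usual derivative. -/
theorem hasDerivAt_rpow_exp_sub_one_mul_exp {a s t : ℝ} (ht : a * t ≠ 0) :
    HasDerivAt (fun τ => (exp (a * τ) - 1) ^ s * exp (-(s * a * τ / 2)))
      (s * a / 2 * (tanh (a * t / 2))⁻¹ * ((exp (a * t) - 1) ^ s * exp (-(s * a * t / 2)))) t := by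
  have hbase : exp (a * t) - 1 ≠ 0 := sub_ne_zero.mpr fun h => ht (exp_eq_one_iff _ |>.mp h)
  have hlin : HasDerivAt (fun τ => a * τ) a t := by simpa using (hasDerivAt_id t).const_mul a
  have hpow := (hlin.exp.sub_const 1).rpow_const (p := s) (Or.inl hbase)
  have harg : HasDerivAt (fun τ => -(s * a * τ / 2)) (-(s * a / 2)) t := by
    simpa using (((hasDerivAt_id' t).const_mul (s * a)).div_const 2).fun_neg
  refine (hpow.mul harg.exp).congr_deriv ?_
  rw [mul_div_assoc, tanh_half_eq, rpow_sub_one hbase]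
  have : exp (a * t) + 1 ≠ 0 := by positivity
  field_simp
  ring

theorem hasDerivAt_rpow_mul_exp_neg_mul_sq (p k : ℝ) {x : ℝ} (hx : x ≠ 0) :
    HasDerivAt (fun y => y ^ p * exp (-(k * y ^ 2)))
      ((p / x - 2 * k * x) * (x ^ p * exp (-(k * x ^ 2)))) x := by
  have harg : HasDerivAt (fun y => -(k * y ^ 2)) (-(k * (2 * x))) x := by
    simpa using ((hasDerivAt_pow 2 x).const_mul k).fun_neg
  refine ((hasDerivAt_rpow_const (p := p) (Or.inl hx)).mul harg.exp).congr_deriv ?_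
  rw [rpow_sub_one hx]
  field_simp
  ring

theorem deriv_deriv_rpow_mul_exp_neg_mul_sq (p k : ℝ) {x : ℝ} (hx : x ≠ 0) :
    deriv (deriv fun y => y ^ p * exp (-(k * y ^ 2))) x =
      (p * (p - 1) / x ^ 2 - 2 * k * (2 * p + 1) + 4 * k ^ 2 * x ^ 2) *
        (x ^ p * exp (-(k * x ^ 2))) := by
  have hderiv : deriv (fun y => y ^ p * exp (-(k * y ^ 2))) =ᶠ[𝓝 x]
      fun y => (p / y - 2 * k * y) * (y ^ p * exp (-(k * y ^ 2))) := by
    filter_upwards [isOpen_ne.mem_nhds hx] with y hy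
    exact (hasDerivAt_rpow_mul_exp_neg_mul_sq p k hy).deriv
  have hcoef : HasDerivAt (fun y => p / y - 2 * k * y) ((0 * x - p * 1) / x ^ 2 - 2 * k * 1) x :=
    ((hasDerivAt_const x p).div (hasDerivAt_id' x) hx).sub ((hasDerivAt_id' x).const_mul (2 * k))
  rw [hderiv.deriv_eq]
  refine (hcoef.mul (hasDerivAt_rpow_mul_exp_neg_mul_sq p k hx)).deriv.trans ?_
  field_simp
  ring

noncomputable def etaStar (α lam δ C t q : ℝ) : ℝ :=
  C * (exp (lam * t) - 1) ^ (-(δ / 2)) * q ^ ((δ - 1) / 2) *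
    exp (lam * δ * t / 4 - lam * q ^ 2 / (α ^ 2 * tanh (lam * t / 2)))

theorem etaStar_eq_time (α lam δ C t q : ℝ) :
    etaStar α lam δ C t q = C * q ^ ((δ - 1) / 2) *
      ((exp (lam * t) - 1) ^ (-(δ / 2)) * exp (-(-(δ / 2) * lam * t / 2)) *
        exp (-(lam * q ^ 2 / α ^ 2 * (tanh (lam * t / 2))⁻¹))) := by
  have hexp : exp (lam * δ * t / 4 - lam * q ^ 2 / (α ^ 2 * tanh (lam * t / 2))) =
      exp (-(-(δ / 2) * lam * t / 2)) * exp (-(lam * q ^ 2 / α ^ 2 * (tanh (lam * t / 2))⁻¹)) := by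
    rw [← exp_add]; congr 1; ring
  rw [etaStar, hexp]
  ring

theorem etaStar_eq_space (α lam δ C t : ℝ) :
    etaStar α lam δ C t = fun y => C * (exp (lam * t) - 1) ^ (-(δ / 2)) * exp (lam * δ * t / 4) *
      (y ^ ((δ - 1) / 2) * exp (-(lam * (tanh (lam * t / 2))⁻¹ / α ^ 2 * y ^ 2))) := by
  funext y
  have hexp : exp (lam * δ * t / 4 - lam * y ^ 2 / (α ^ 2 * tanh (lam * t / 2))) =
      exp (lam * δ * t / 4) * exp (-(lam * (tanh (lam * t / 2))⁻¹ / α ^ 2 * y ^ 2)) := by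
    rw [← exp_add]; congr 1; ring
  rw [etaStar, hexp]
  ring

theorem hasDerivAt_etaStar_time (α lam δ C q : ℝ) {t : ℝ} (ht : lam * t ≠ 0) :
    HasDerivAt (fun τ => etaStar α lam δ C τ q)
      ((-(δ * lam / 4) * (tanh (lam * t / 2))⁻¹ +
        lam ^ 2 * q ^ 2 / (2 * α ^ 2) * ((tanh (lam * t / 2))⁻¹ ^ 2 - 1)) *
          etaStar α lam δ C t q) t := by
  have hhalf : lam * t / 2 ≠ 0 := div_ne_zero ht two_ne_zero
  have hlin : HasDerivAt (fun τ => lam * τ / 2) (lam / 2) t := by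
    simpa using ((hasDerivAt_id t).const_mul lam).div_const 2
  have hcoth :=
    (((hasDerivAt_inv_tanh hhalf).comp t hlin).const_mul (lam * q ^ 2 / α ^ 2)).fun_neg.exp
  simp_rw [etaStar_eq_time]
  refine (((hasDerivAt_rpow_exp_sub_one_mul_exp ht).fun_mul hcoth).const_mul
    (C * q ^ ((δ - 1) / 2))).congr_deriv ?_
  simp only [Function.comp_apply]
  ring

theorem deriv_deriv_etaStar_space (α lam δ C t : ℝ) {q : ℝ} (hq : q ≠ 0) :
    deriv (deriv (etaStar α lam δ C t)) q =
      ((δ - 1) * (δ - 3) / (4 * q ^ 2) - 2 * δ * lam * (tanh (lam * t / 2))⁻¹ / α ^ 2 +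
        4 * (lam * (tanh (lam * t / 2))⁻¹ / α ^ 2) ^ 2 * q ^ 2) * etaStar α lam δ C t q := by
  simp only [etaStar_eq_space, deriv_const_mul_field']
  rw [deriv_deriv_rpow_mul_exp_neg_mul_sq _ _ hq]
  ring

theorem etaStar_solves_dual_heat_general (α lam δ θ A B C : ℝ) (hα : 0 < α) (hlam : lam ≠ 0)
    (hθ : θ = α / 2)
    (hA : A = α ^ 4 * (δ - 1) * (δ - 3) / 128) (hB : B = lam ^ 2 / 8)
    (ηs : ℝ → ℝ → ℝ)
    (hηs : ∀ t q, ηs t q =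
      C * (Real.exp (lam * t) - 1) ^ (-(δ / 2)) * q ^ ((δ - 1) / 2) *
        Real.exp (lam * δ * t / 4 - lam * q ^ 2 / (α ^ 2 * Real.tanh (lam * t / 2))))
    (t q : ℝ) (ht : 0 < t) (hq : 0 < q) :
    -(θ ^ 2) * deriv (fun τ => ηs τ q) t
      = -(θ ^ 4 / 2) * deriv (deriv (ηs t)) q + (A / q ^ 2 + B * q ^ 2) * ηs t q := by
  obtain rfl : ηs = etaStar α lam δ C := funext₂ hηs
  subst hθ hA hB
  have hα0 : α ≠ 0 := hα.ne'
  rw [(hasDerivAt_etaStar_time α lam δ C q (mul_ne_zero hlam ht.ne')).deriv,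
    deriv_deriv_etaStar_space α lam δ C t hq.ne']
  field_simp
  ring

/-- The function `η*(t,q) = C (e^{λt}-1)^{-δ/2} q^{(δ-1)/2} exp(λδt/4 - λq²/(α² tanh(λt/2)))`,
with `C = 2^{δ/2+1} α^{-δ} λ^{δ/2} Γ(δ/2)⁻¹`, satisfies the dual (forward) heat equation
with potential `V(t,q) = A/q² + Bq²`. -/
theorem etaStar_solves_dual_heat (α lam δ θ A B C : ℝ) (hα : 0 < α) (hlam : lam ≠ 0)
    (hθ : θ = α / 2)
    (hA : A = α ^ 4 * (δ - 1) * (δ - 3) / 128) (hB : B = lam ^ 2 / 8)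
    (hC : C = 2 ^ (δ / 2 + 1) * α ^ (-δ) * lam ^ (δ / 2) * (Real.Gamma (δ / 2))⁻¹)
    (ηs : ℝ → ℝ → ℝ)
    (hηs : ∀ t q, ηs t q =
      C * (Real.exp (lam * t) - 1) ^ (-(δ / 2)) * q ^ ((δ - 1) / 2) *
        Real.exp (lam * δ * t / 4 - lam * q ^ 2 / (α ^ 2 * Real.tanh (lam * t / 2))))
    (t q : ℝ) (ht : 0 < t) (hq : 0 < q) :
    -(θ ^ 2) * deriv (fun τ => ηs τ q) t
      = -(θ ^ 4 / 2) * deriv (deriv (ηs t)) q + (A / q ^ 2 + B * q ^ 2) * ηs t q :=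
  etaStar_solves_dual_heat_general α lam δ θ A B C hα hlam hθ hA hB ηs hηs t q ht hq
end
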